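/- arXiv:2411.10771 — 8 statements merged into one kernel-verified Lean document; each statement's English description precedes it below -/
import Mathlib

section
/- For each n ∈ ℕ, n ≥ 1, the function f(r) = r^{2n} - r^{2n+2} on [0,1) attains its supremum (1/(n+1))(n/(n+1))^n at r = √(n/(n+1)), and its range is the interval [0, (1/(n+1))(n/(n+1))^n]. Consequently, for the rank one operator A(f) = ⟨f, zⁿ⟩zⁿ on H²(𝔻), whose Berezin transform is Ã(λ) = (1-|λ|²)|λ|^{2n}, the Berezin range is [0, (1/(n+1))(n/(n+1))^n], which is convex in ℂ. -/
/-!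
Writing `t = r²`, the function is `t ^ n * (1 - t)`, and with `t = s x`, `s = n / (n + 1)`, the bound
`t ^ n * (1 - t) ≤ s ^ n / (n + 1)` becomes `x ^ n * (n + 1 - n x) ≤ 1` for `x ≥ 0`, which follows by
induction on `n` since consecutive terms differ by `-(n + 1) x ^ n (x - 1) ^ 2`. The maximum is
attained at `r = √s` and the function vanishes at `r = 0`, so the intermediate value theorem
fills `[0, max]`. The Berezin transform is this radial function of `|λ|`, so its range is the
same interval, embedded in `ℂ`.
-/

theorem pow_mul_add_one_sub_mul_le_one (n : ℕ) {x : ℝ} (hx : 0 ≤ x) :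
    x ^ n * (n + 1 - n * x) ≤ 1 := by
  induction n with
  | zero => simp
  | succ n ih =>
    have step : x ^ (n + 1) * ((n + 1 : ℕ) + 1 - (n + 1 : ℕ) * x)
        = x ^ n * (n + 1 - n * x) - (n + 1) * x ^ n * (x - 1) ^ 2 := by
      push_cast; ring
    rw [step]
    have : 0 ≤ (n + 1) * x ^ n * (x - 1) ^ 2 := by positivity
    linarith

theorem pow_mul_one_sub_le (n : ℕ) {t : ℝ} (ht : 0 ≤ t) :
    t ^ n * (1 - t) ≤ (1 / (n + 1)) * ((n : ℝ) / (n + 1)) ^ n := by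
  rcases n.eq_zero_or_pos with rfl | hn
  · simpa using ht
  have hn' : (0 : ℝ) < n := by exact_mod_cast hn
  set s : ℝ := n / (n + 1)
  have hs : 0 < s := by positivity
  have key := pow_mul_add_one_sub_mul_le_one n (div_nonneg ht hs.le)
  have h_lin : (n : ℝ) * (t / s) = (n + 1) * t := by simp only [s]; field_simp
  have h_pow : s ^ n * (t / s) ^ n = t ^ n := by rw [← mul_pow, mul_div_cancel₀ _ hs.ne']
  calc t ^ n * (1 - t) = 1 / (n + 1) * s ^ n * ((t / s) ^ n * (n + 1 - n * (t / s))) := by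
        rw [h_lin]; field_simp; linear_combination (1 - t) * h_pow.symm
    _ ≤ 1 / (n + 1) * s ^ n := mul_le_of_le_one_right (by positivity) key

theorem pow_two_mul_sub_pow_two_mul_add_two_le (n : ℕ) (r : ℝ) :
    r ^ (2 * n) - r ^ (2 * n + 2) ≤ (1 / (n + 1)) * ((n : ℝ) / (n + 1)) ^ n := by
  calc r ^ (2 * n) - r ^ (2 * n + 2) = (r ^ 2) ^ n * (1 - r ^ 2) := by ring
    _ ≤ _ := pow_mul_one_sub_le n (sq_nonneg r)

theorem sqrt_pow_two_mul_sub_pow_two_mul_add_two {c : ℝ} (hc : 0 ≤ c) (n : ℕ) :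
    √c ^ (2 * n) - √c ^ (2 * n + 2) = c ^ n * (1 - c) := by
  rw [show 2 * n + 2 = 2 * (n + 1) by ring, pow_mul, pow_mul, Real.sq_sqrt hc]; ring

theorem sqrt_div_add_one_pow_two_mul_sub_pow_two_mul_add_two (n : ℕ) :
    √((n : ℝ) / (n + 1)) ^ (2 * n) - √((n : ℝ) / (n + 1)) ^ (2 * n + 2)
      = (1 / (n + 1)) * ((n : ℝ) / (n + 1)) ^ n := by
  rw [sqrt_pow_two_mul_sub_pow_two_mul_add_two (by positivity)]
  field_simp
  ring

theorem image_Ico_pow_two_mul_sub_pow_two_mul_add_two {n : ℕ} (hn : n ≠ 0) :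
    (fun r : ℝ => r ^ (2 * n) - r ^ (2 * n + 2)) '' Set.Ico 0 1
      = Set.Icc 0 ((1 / (n + 1)) * ((n : ℝ) / (n + 1)) ^ n) := by
  apply (Set.image_subset_iff.2 _).antisymm
  · have h_lt : √((n : ℝ) / (n + 1)) < 1 := by
      rw [Real.sqrt_lt' one_pos, one_pow, div_lt_one (by positivity)]
      linarith
    have h_ivt := intermediate_value_Icc (Real.sqrt_nonneg ((n : ℝ) / (n + 1)))
      (by fun_prop : Continuous fun r : ℝ => r ^ (2 * n) - r ^ (2 * n + 2)).continuousOn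
    rw [sqrt_div_add_one_pow_two_mul_sub_pow_two_mul_add_two, zero_pow (by omega),
      zero_pow (by omega), sub_zero] at h_ivt
    exact h_ivt.trans (Set.image_mono (Set.Icc_subset_Ico_right h_lt))
  · rintro r ⟨hr0, hr1⟩
    exact ⟨sub_nonneg.2 (pow_le_pow_of_le_one hr0 hr1.le (by omega)),
      pow_two_mul_sub_pow_two_mul_add_two_le n r⟩

theorem setOf_one_sub_norm_sq_mul_norm_pow_eq_image (n : ℕ) :
    {z : ℂ | ∃ l : ℂ, ‖l‖ < 1 ∧ z = (((1 - ‖l‖ ^ 2) * ‖l‖ ^ (2 * n) : ℝ) : ℂ)}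
      = (fun x : ℝ => (x : ℂ)) ''
          ((fun r : ℝ => r ^ (2 * n) - r ^ (2 * n + 2)) '' Set.Ico 0 1) := by
  have h_eq (r : ℝ) : (1 - r ^ 2) * r ^ (2 * n) = r ^ (2 * n) - r ^ (2 * n + 2) := by ring
  ext z
  simp only [Set.mem_ofPred_eq, Set.image_image, Set.mem_image, Set.mem_Ico, h_eq]
  constructor
  · rintro ⟨l, hl, rfl⟩
    exact ⟨‖l‖, ⟨norm_nonneg l, hl⟩, rfl⟩
  · rintro ⟨r, ⟨hr0, hr1⟩, rfl⟩
    have h_norm : ‖(r : ℂ)‖ = r := by rw [Complex.norm_real, Real.norm_of_nonneg hr0]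
    exact ⟨r, h_norm.symm ▸ hr1, by rw [h_norm]⟩

/-- For `n ≥ 1`, the function `f r = r^(2n) - r^(2n+2)` on `[0,1)` attains its
supremum `(1/(n+1)) * (n/(n+1))^n` at `r = √(n/(n+1))`, its range is the
interval `[0, (1/(n+1)) * (n/(n+1))^n]`; consequently, the Berezin range of the
rank one operator `A f = ⟨f, zⁿ⟩ zⁿ` on `H²(𝔻)`, whose Berezin transform is
`Ã(λ) = (1-|λ|²)|λ|^(2n)`, is that interval, which is convex in `ℂ`. -/
theorem berezin_range_rank_one_zn_hardy (n : ℕ) (hn : 1 ≤ n) :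
    (∀ r ∈ Set.Ico (0:ℝ) 1,
        r ^ (2*n) - r ^ (2*n+2) ≤ (1 / (n+1)) * ((n : ℝ) / (n+1)) ^ n) ∧
    (Real.sqrt ((n : ℝ) / (n+1))) ^ (2*n) - (Real.sqrt ((n : ℝ) / (n+1))) ^ (2*n+2)
        = (1 / (n+1)) * ((n : ℝ) / (n+1)) ^ n ∧
    (fun r : ℝ => r ^ (2*n) - r ^ (2*n+2)) '' Set.Ico (0:ℝ) 1
        = Set.Icc 0 ((1 / (n+1)) * ((n : ℝ) / (n+1)) ^ n) ∧
    {z : ℂ | ∃ l : ℂ, ‖l‖ < 1 ∧ z = (((1 - ‖l‖ ^ 2) * ‖l‖ ^ (2*n) : ℝ) : ℂ)}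
        = (fun x : ℝ => (x : ℂ)) '' Set.Icc 0 ((1 / (n+1)) * ((n : ℝ) / (n+1)) ^ n) ∧
    Convex ℝ {z : ℂ | ∃ l : ℂ, ‖l‖ < 1 ∧ z = (((1 - ‖l‖ ^ 2) * ‖l‖ ^ (2*n) : ℝ) : ℂ)} := by
  have h_image := image_Ico_pow_two_mul_sub_pow_two_mul_add_two (n := n) (by omega)
  have h_berezin : {z : ℂ | ∃ l : ℂ, ‖l‖ < 1 ∧ z = (((1 - ‖l‖ ^ 2) * ‖l‖ ^ (2*n) : ℝ) : ℂ)}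
      = (fun x : ℝ => (x : ℂ)) '' Set.Icc 0 ((1 / (n+1)) * ((n : ℝ) / (n+1)) ^ n) := by
    rw [setOf_one_sub_norm_sq_mul_norm_pow_eq_image, h_image]
  refine ⟨fun r _ => pow_two_mul_sub_pow_two_mul_add_two_le n r,
    sqrt_div_add_one_pow_two_mul_sub_pow_two_mul_add_two n, h_image, h_berezin, ?_⟩
  rw [h_berezin]
  exact (convex_Icc _ _).linear_image Complex.ofRealCLM.toLinearMap
end

section
/- If A_n(f) = Σ_{i=1}^n ⟨f, a_i z^i⟩ a_i z^i on H²(𝔻) with |a_i| = |a| for all i, then the Berezin transform is Ã_n(λ) = |a|²|λ|² - |a|²|λ|^{2n+2}, and Ber(A_n) = [0, |a|² (1/(n+1))^{1/n} (n/(n+1))]. -/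
lemma aux_t0_pow (n : ℕ) (hn : 1 ≤ n) :
    (((1:ℝ)/(n+1)) ^ ((1:ℝ)/n)) ^ n = 1/(n+1) := by
  have hn0 : (n:ℝ) ≠ 0 := Nat.cast_ne_zero.2 (by omega)
  rw [← Real.rpow_natCast (((1:ℝ)/(n+1)) ^ ((1:ℝ)/n)) n,
    ← Real.rpow_mul (by positivity), one_div_mul_cancel hn0, Real.rpow_one]

lemma aux_key_ineq (n : ℕ) (hn : 1 ≤ n) (P t : ℝ) (hP : 0 < P) (hPn : P ^ n = 1/(n+1))
    (ht : 0 ≤ t) : t - t ^ (n+1) ≤ P * (n / (n+1)) := by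
  have h := one_add_mul_le_pow (a := t / P - 1) (by
    have : 0 ≤ t / P := by positivity
    linarith) (n+1)
  have hkey : (1 + (t/P - 1)) ^ (n+1) * P ^ (n+1) = t ^ (n+1) := by
    rw [show (1 + (t/P - 1)) = t / P by ring, div_pow,
      div_mul_cancel₀ _ (by positivity : P ^ (n+1) ≠ 0)]
  have hPn1 : P ^ (n+1) = P * (1/(n+1)) := by rw [pow_succ, hPn]; ring
  have hmul := mul_le_mul_of_nonneg_right h (le_of_lt (pow_pos hP (n+1)))
  rw [hkey] at hmul
  have hne : (n:ℝ) + 1 ≠ 0 := by positivity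
  have hexp : (1 + (↑(n+1):ℝ) * (t/P - 1)) * P ^ (n+1) = t - (n:ℝ) * (P * (1/(n+1))) := by
    push_cast
    rw [hPn1]
    field_simp
    ring
  rw [hexp] at hmul
  have h2 : P * ((n:ℝ) / (n+1)) = (n:ℝ) * (P * (1/(n+1))) := by ring
  linarith [h2 ▸ hmul]

/-- If `A_n f = Σ_{i=1}^n ⟨f, a_i z^i⟩ a_i z^i` on `H²(𝔻)` with `|a_i| = |a|` for all `i`,
then the Berezin transform is `Ã_n(λ) = |a|²|λ|² - |a|²|λ|^(2n+2)`, and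
`Ber(A_n) = [0, |a|² (1/(n+1))^(1/n) (n/(n+1))]`. -/
theorem berezin_range_finite_rank_hardy_equal_moduli (n : ℕ) (hn : 1 ≤ n)
    (a : Fin n → ℂ) (c : ℂ) (ha : ∀ i, ‖a i‖ = ‖c‖) :
    (∀ l : ℂ, ‖l‖ < 1 →
      (1 - ‖l‖ ^ 2) * ∑ i : Fin n, ‖a i‖ ^ 2 * ‖l‖ ^ (2 * ((i : ℕ) + 1))
        = ‖c‖ ^ 2 * ‖l‖ ^ 2 - ‖c‖ ^ 2 * ‖l‖ ^ (2 * n + 2)) ∧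
    {x : ℝ | ∃ l : ℂ, ‖l‖ < 1 ∧ x = ‖c‖ ^ 2 * ‖l‖ ^ 2 - ‖c‖ ^ 2 * ‖l‖ ^ (2 * n + 2)}
      = Set.Icc 0 (‖c‖ ^ 2 * ((1 / (n + 1) : ℝ) ^ ((1 : ℝ) / n)) * ((n : ℝ) / (n + 1))) := by
  have hK0 : (0:ℝ) ≤ ‖c‖ ^ 2 := by positivity
  set K : ℝ := ‖c‖ ^ 2 with hK
  set P : ℝ := ((1 / (n + 1) : ℝ) ^ ((1 : ℝ) / n)) with hPdef
  have hP0 : 0 < P := Real.rpow_pos_of_pos (by positivity) _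
  have hP1 : P < 1 := by
    apply Real.rpow_lt_one (by positivity) _ (by positivity)
    rw [div_lt_one (by positivity)]
    have : (1:ℝ) ≤ (n:ℝ) := by exact_mod_cast hn
    linarith
  have hPn : P ^ n = 1 / (n + 1) := aux_t0_pow n hn
  have h2n2 : 2 * n + 2 = 2 * (n + 1) := by ring
  constructor
  · intro l hl
    set s : ℝ := ‖l‖ ^ 2 with hs
    have hsum : ∑ i : Fin n, ‖a i‖ ^ 2 * ‖l‖ ^ (2 * ((i : ℕ) + 1))
        = K * s * ∑ i ∈ Finset.range n, s ^ i := by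
      simp only [ha]
      rw [Fin.sum_univ_eq_sum_range (fun i => ‖c‖ ^ 2 * ‖l‖ ^ (2 * (i + 1))) n,
        Finset.mul_sum]
      refine Finset.sum_congr rfl fun i _ => ?_
      rw [pow_mul]
      ring
    rw [hsum, h2n2, pow_mul]
    have hg := geom_sum_mul s n
    linear_combination (-(K*s)) * hg
  · ext x
    simp only [Set.mem_setOf_eq, Set.mem_Icc]
    constructor
    · rintro ⟨l, hl, rfl⟩
      set t : ℝ := ‖l‖ ^ 2 with hts
      have ht0 : 0 ≤ t := by positivity
      have ht1 : t < 1 := by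
        have := pow_lt_one₀ (norm_nonneg l) hl (two_ne_zero)
        simpa [hts] using this
      have hrw : ‖l‖ ^ (2 * n + 2) = t ^ (n + 1) := by rw [h2n2, pow_mul]
      rw [hrw]
      constructor
      · have : t ^ (n + 1) ≤ t ^ 1 :=
          pow_le_pow_of_le_one ht0 (le_of_lt ht1) (by omega)
        simp only [pow_one] at this
        nlinarith
      · have h1 := aux_key_ineq n hn P t hP0 hPn ht0
        nlinarith
    · rintro ⟨hx0, hx1⟩
      have hcont : ContinuousOn (fun t : ℝ => K * t - K * t ^ (n + 1)) (Set.Icc 0 P) :=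
        (Continuous.sub (continuous_const.mul continuous_id)
          (continuous_const.mul (continuous_pow (n+1)))).continuousOn
      have hfP : K * P - K * P ^ (n + 1) = K * P * ((n:ℝ) / (n + 1)) := by
        have hne : (n:ℝ) + 1 ≠ 0 := by positivity
        rw [pow_succ, hPn]
        field_simp
        ring
      have hivt := intermediate_value_Icc (le_of_lt hP0) hcont
      have hx : x ∈ Set.Icc (K * 0 - K * 0 ^ (n + 1)) (K * P - K * P ^ (n + 1)) := by
        constructor
        · simpa [zero_pow (Nat.succ_ne_zero n)] using hx0
        · rw [hfP]; exact hx1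
      obtain ⟨t, ht, hft⟩ := hivt hx
      have ht0 : 0 ≤ t := ht.1
      have ht1 : t < 1 := lt_of_le_of_lt ht.2 hP1
      refine ⟨(Real.sqrt t : ℂ), ?_, ?_⟩
      · rw [Complex.norm_real, Real.norm_eq_abs, abs_of_nonneg (Real.sqrt_nonneg t)]
        rw [show (1:ℝ) = Real.sqrt 1 by simp]
        exact Real.sqrt_lt_sqrt ht0 (by simpa using ht1)
      · have hnorm : ‖((Real.sqrt t : ℝ) : ℂ)‖ ^ 2 = t := by
          rw [Complex.norm_real, Real.norm_eq_abs, abs_of_nonneg (Real.sqrt_nonneg t), Real.sq_sqrt ht0]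
        have hnorm2 : ‖((Real.sqrt t : ℝ) : ℂ)‖ ^ (2 * n + 2) = t ^ (n + 1) := by
          rw [h2n2, pow_mul, hnorm]
        rw [hnorm, hnorm2]
        exact hft.symm
end

section
/- The Berezin range of the rank one operator A(f) = ⟨f, 1+z⟩(1+z²) on H²(𝔻), namely Ber(A) = {(1-|λ|²)(1+conj(λ))(1+λ²) : λ ∈ 𝔻}, is not a convex subset of ℂ. -/
/-!
A set closed under conjugation and convex contains the real part `(z + z̄)/2` of each of its
points. The Berezin range is closed under conjugation since `Ã(λ̄) = conj Ã(λ)`. Its real points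
are positive: `Im Ã(x + iy) = (1 - |λ|²) y ((x + 1)² + y² - 2)`, and on the circle
`(x + 1)² + y² = 2` one has `1 - |λ|² = 2x` and `Ã = 8x²`. But `Re Ã(-1/5 + 9i/10) = -21/1000`.
-/

open ComplexConjugate

theorem Convex.ofReal_re_mem {s : Set ℂ} (hs : Convex ℝ s) (hconj : ∀ z ∈ s, conj z ∈ s)
    {z : ℂ} (hz : z ∈ s) : (z.re : ℂ) ∈ s := by
  have hmid := hs hz (hconj z hz) (by norm_num : (0 : ℝ) ≤ 1 / 2) (by norm_num : (0 : ℝ) ≤ 1 / 2)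
    (by norm_num)
  convert hmid using 1
  apply Complex.ext
  · simp only [Complex.ofReal_re, Complex.add_re, Complex.smul_re, Complex.conj_re, smul_eq_mul]
    ring
  · simp

namespace Hardy

noncomputable def berezinSymbol (l : ℂ) : ℂ :=
  ((1 - ‖l‖ ^ 2 : ℝ) : ℂ) * (1 + conj l) * (1 + l ^ 2)

def berezinRange : Set ℂ :=
  {z : ℂ | ∃ l : ℂ, ‖l‖ < 1 ∧ z = berezinSymbol l}

theorem berezinSymbol_conj (l : ℂ) : berezinSymbol (conj l) = conj (berezinSymbol l) := by
  simp [berezinSymbol]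

theorem conj_mem_berezinRange {z : ℂ} (hz : z ∈ berezinRange) : conj z ∈ berezinRange := by
  obtain ⟨l, hl, rfl⟩ := hz
  exact ⟨conj l, by rwa [Complex.norm_conj], (berezinSymbol_conj l).symm⟩

theorem berezinSymbol_re (l : ℂ) :
    (berezinSymbol l).re = (1 - (l.re ^ 2 + l.im ^ 2)) *
      ((1 + l.re) * (1 + l.re ^ 2 - l.im ^ 2) + 2 * l.re * l.im ^ 2) := by
  rw [berezinSymbol, Complex.sq_norm, Complex.normSq_apply]
  simp only [Complex.mul_re, Complex.mul_im, Complex.ofReal_re, Complex.ofReal_im,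
    Complex.add_re, Complex.add_im, Complex.one_re, Complex.one_im, Complex.conj_re,
    Complex.conj_im, pow_two]
  ring

theorem berezinSymbol_im (l : ℂ) :
    (berezinSymbol l).im =
      (1 - (l.re ^ 2 + l.im ^ 2)) * (l.im * ((l.re + 1) ^ 2 + l.im ^ 2 - 2)) := by
  rw [berezinSymbol, Complex.sq_norm, Complex.normSq_apply]
  simp only [Complex.mul_re, Complex.mul_im, Complex.ofReal_re, Complex.ofReal_im,
    Complex.add_re, Complex.add_im, Complex.one_re, Complex.one_im, Complex.conj_re,
    Complex.conj_im, pow_two]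
  ring

theorem berezinSymbol_re_pos_of_im_eq_zero {l : ℂ} (hl : ‖l‖ < 1)
    (him : (berezinSymbol l).im = 0) : 0 < (berezinSymbol l).re := by
  obtain ⟨x, y⟩ := l
  have hr : 0 < 1 - (x ^ 2 + y ^ 2) := by
    have h := pow_lt_one₀ (norm_nonneg _) hl two_ne_zero
    rw [Complex.sq_norm, Complex.normSq_mk] at h
    linarith
  rw [berezinSymbol_im, mul_eq_zero, mul_eq_zero] at him
  rw [berezinSymbol_re]
  rcases him with hr0 | hy | hcircle
  · exact absurd hr0 hr.ne'
  · dsimp only at hy hr ⊢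
    subst hy
    have h1x : 0 < 1 + x := by nlinarith
    exact mul_pos (by linarith) (by nlinarith [mul_pos h1x (by positivity : (0 : ℝ) < 1 + x ^ 2)])
  · dsimp only at hcircle hr ⊢
    have hr2x : 1 - (x ^ 2 + y ^ 2) = 2 * x := by linarith
    have hx : 0 < x := by linarith
    have hre : (1 + x) * (1 + x ^ 2 - y ^ 2) + 2 * x * y ^ 2 = 4 * x := by
      linear_combination (-(1 + x) + 2 * x) * hcircle
    rw [hr2x, hre]
    positivity

theorem berezinSymbol_re_neg : (berezinSymbol ⟨-1 / 5, 9 / 10⟩).re < 0 := by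
  rw [berezinSymbol_re]
  norm_num

end Hardy

open Hardy in
/-- The Berezin range of the rank one operator `A f = ⟨f, 1+z⟩(1+z²)` on `H²(𝔻)`,
namely `{(1-|λ|²)(1+conj λ)(1+λ²) : λ ∈ 𝔻}`, is not convex in `ℂ`. -/
theorem berezin_range_not_convex_hardy :
    ¬ Convex ℝ {z : ℂ | ∃ l : ℂ, ‖l‖ < 1 ∧
      z = ((1 - ‖l‖ ^ 2 : ℝ) : ℂ) * (1 + (starRingEnd ℂ) l) * (1 + l ^ 2)} := by
  change ¬ Convex ℝ berezinRange
  intro hconv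
  set l₀ : ℂ := ⟨-1 / 5, 9 / 10⟩
  have hl₀ : ‖l₀‖ < 1 := by
    rw [← sq_lt_one_iff₀ (norm_nonneg _), Complex.sq_norm, Complex.normSq_mk]
    norm_num
  obtain ⟨l, hl, heq⟩ :=
    hconv.ofReal_re_mem (fun _ ↦ conj_mem_berezinRange) ⟨l₀, hl₀, rfl⟩
  have hpos := berezinSymbol_re_pos_of_im_eq_zero hl (by rw [← heq, Complex.ofReal_im])
  rw [← heq, Complex.ofReal_re] at hpos
  exact hpos.not_gt berezinSymbol_re_neg
end

section
/- Let m > n ≥ 1 and A(f) = ⟨f, zⁿ⟩ z^m on H²(𝔻). Then Ber(A) = {(r^{m+n} - r^{m+n+2}) e^{iθ(m-n)} : 0 ≤ r < 1, θ ∈ ℝ} is the closed disc centered at the origin of radius (2/(m+n+2)) · ((m+n)/(m+n+2))^{(m+n)/2}; in particular Ber(A) is convex. -/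
/-!
Writing `t = r²` and `k = m + n`, the modulus `r^k - r^(k+2) = t^(k/2) (1 - t)` is bounded on
`[0, 1]` by weighted AM–GM, with equality at `t = k/(k+2)`; it vanishes at `r = 0`, so by the
intermediate value theorem it takes every value between `0` and that maximum for `r < 1`.
Since `m ≠ n`, the phase `e^{iθ(m-n)}` runs over the whole unit circle, so the Berezin range
is the closed disc, which is convex.
-/

open Complex Set Metric

namespace Real

theorem rpow_mul_one_sub_le {p t : ℝ} (hp : 0 < p) (ht₀ : 0 ≤ t) (ht₁ : t ≤ 1) :
    t ^ p * (1 - t) ≤ (p / (p + 1)) ^ p * (1 / (p + 1)) := by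
  set w₁ := p / (p + 1) with hw₁_def
  set w₂ := 1 / (p + 1) with hw₂_def
  have hw₁ : 0 < w₁ := by positivity
  have hw₂ : 0 < w₂ := by positivity
  -- weighted AM–GM for `t / w₁` and `(1 - t) / w₂`, whose weighted mean is `1`
  have hgm : (t / w₁) ^ w₁ * ((1 - t) / w₂) ^ w₂ ≤ 1 :=
    calc _ ≤ w₁ * (t / w₁) + w₂ * ((1 - t) / w₂) :=
          geom_mean_le_arith_mean2_weighted hw₁.le hw₂.le (div_nonneg ht₀ hw₁.le)
            (div_nonneg (sub_nonneg.2 ht₁) hw₂.le) (by rw [hw₁_def, hw₂_def]; field_simp)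
      _ = 1 := by field_simp; ring
  have hpow : ((t / w₁) ^ w₁ * ((1 - t) / w₂) ^ w₂) ^ (p + 1)
      = (t / w₁) ^ p * ((1 - t) / w₂) := by
    rw [mul_rpow (by positivity) (by positivity), ← rpow_mul (by positivity),
      ← rpow_mul (by positivity)]
    have e₁ : w₁ * (p + 1) = p := by rw [hw₁_def]; field_simp
    have e₂ : w₂ * (p + 1) = 1 := by rw [hw₂_def]; field_simp
    rw [e₁, e₂, rpow_one]
  have h := hpow ▸ rpow_le_one (by positivity) hgm (by positivity)
  rwa [div_rpow ht₀ hw₁.le, div_mul_div_comm, div_le_one (by positivity)] at h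

end Real

theorem pow_sub_pow_add_two_eq {r : ℝ} (hr : 0 ≤ r) (k : ℕ) :
    r ^ k - r ^ (k + 2) = (r ^ 2) ^ ((k : ℝ) / 2) * (1 - r ^ 2) := by
  rw [← Real.rpow_natCast_mul hr, Nat.cast_ofNat, mul_div_cancel₀ _ two_ne_zero,
    Real.rpow_natCast]
  ring

theorem pow_sub_pow_add_two_le {k : ℕ} (hk : k ≠ 0) {r : ℝ} (hr₀ : 0 ≤ r) (hr₁ : r ≤ 1) :
    r ^ k - r ^ (k + 2) ≤ 2 / ((k : ℝ) + 2) * ((k : ℝ) / (k + 2)) ^ ((k : ℝ) / 2) := by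
  have hp : (0 : ℝ) < k / 2 := by positivity
  have h := Real.rpow_mul_one_sub_le hp (sq_nonneg r) (pow_le_one₀ hr₀ hr₁)
  have e₁ : (k : ℝ) / 2 / (k / 2 + 1) = k / (k + 2) := by field_simp
  have e₂ : 1 / ((k : ℝ) / 2 + 1) = 2 / (k + 2) := by field_simp
  rw [e₁, e₂] at h
  rw [pow_sub_pow_add_two_eq hr₀, mul_comm (2 / _)]
  exact h

theorem image_Ico_pow_sub_pow_add_two {k : ℕ} (hk : k ≠ 0) :
    (fun r : ℝ => r ^ k - r ^ (k + 2)) '' Ico 0 1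
      = Icc 0 (2 / ((k : ℝ) + 2) * ((k : ℝ) / (k + 2)) ^ ((k : ℝ) / 2)) := by
  have hk₂ : (0 : ℝ) < k + 2 := by positivity
  set r₀ := √((k : ℝ) / (k + 2))
  have hr₀_sq : r₀ ^ 2 = k / (k + 2) := Real.sq_sqrt (by positivity)
  have hr₀_lt : r₀ < 1 := by
    rw [Real.sqrt_lt' one_pos, one_pow, div_lt_one hk₂]
    linarith
  have hr₀_max : r₀ ^ k - r₀ ^ (k + 2)
      = 2 / ((k : ℝ) + 2) * ((k : ℝ) / (k + 2)) ^ ((k : ℝ) / 2) := by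
    rw [pow_sub_pow_add_two_eq (Real.sqrt_nonneg _), hr₀_sq, mul_comm]
    congr 1
    field_simp
    ring
  apply Subset.antisymm
  · rintro _ ⟨r, ⟨hr₀, hr₁⟩, rfl⟩
    exact ⟨sub_nonneg.2 (pow_le_pow_of_le_one hr₀ hr₁.le (by omega)),
      pow_sub_pow_add_two_le hk hr₀ hr₁.le⟩
  · have hivt := intermediate_value_Icc (Real.sqrt_nonneg (k / (k + 2)))
      (f := fun r : ℝ => r ^ k - r ^ (k + 2)) (by fun_prop)
    rw [zero_pow hk, zero_pow (by omega), sub_zero, hr₀_max] at hivt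
    exact hivt.trans (image_mono (Icc_subset_Ico_right hr₀_lt))

theorem setOf_ofReal_mul_exp_eq_closedBall {f : ℝ → ℝ} {s : Set ℝ} {R c : ℝ}
    (hf : f '' s = Icc 0 R) (hc : c ≠ 0) :
    {z : ℂ | ∃ r θ : ℝ, r ∈ s ∧ z = (f r : ℂ) * exp ((θ * c : ℝ) * I)} = closedBall 0 R := by
  ext z
  simp only [mem_ofPred_eq, mem_closedBall, dist_zero_right]
  constructor
  · rintro ⟨r, θ, hr, rfl⟩
    have hfr : f r ∈ Icc 0 R := hf ▸ mem_image_of_mem f hr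
    rw [norm_mul, norm_exp_ofReal_mul_I, mul_one, norm_real, Real.norm_of_nonneg hfr.1]
    exact hfr.2
  · intro hz
    obtain ⟨r, hr, hfr⟩ : ‖z‖ ∈ f '' s := hf ▸ ⟨norm_nonneg z, hz⟩
    refine ⟨r, z.arg / c, hr, ?_⟩
    rw [div_mul_cancel₀ _ hc, hfr, norm_mul_exp_arg_mul_I]

theorem berezin_range_rank_one_zn_zm_hardy_general (m n : ℕ) (hmn : n < m) :
    {z : ℂ | ∃ r θ : ℝ, 0 ≤ r ∧ r < 1 ∧
        z = ((r ^ (m + n) - r ^ (m + n + 2) : ℝ) : ℂ) *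
          Complex.exp ((θ * ((m : ℝ) - n) : ℝ) * Complex.I)} =
      Metric.closedBall (0 : ℂ)
        ((2 / ((m : ℝ) + n + 2)) *
          (((m : ℝ) + n) / ((m : ℝ) + n + 2)) ^ (((m : ℝ) + n) / 2)) ∧
    Convex ℝ {z : ℂ | ∃ r θ : ℝ, 0 ≤ r ∧ r < 1 ∧
        z = ((r ^ (m + n) - r ^ (m + n + 2) : ℝ) : ℂ) *
          Complex.exp ((θ * ((m : ℝ) - n) : ℝ) * Complex.I)} := by
  have hc : (m : ℝ) - n ≠ 0 := sub_ne_zero.2 (Nat.cast_lt.2 hmn).ne'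
  have hrange := setOf_ofReal_mul_exp_eq_closedBall
    (image_Ico_pow_sub_pow_add_two (k := m + n) (by omega)) hc
  rw [Nat.cast_add] at hrange
  simp only [mem_Ico, and_assoc] at hrange
  exact ⟨hrange, hrange ▸ convex_closedBall _ _⟩

/-- For `m > n ≥ 1` and `A f = ⟨f, zⁿ⟩ z^m` on `H²(𝔻)`,
`Ber(A) = {(r^(m+n) - r^(m+n+2)) e^{iθ(m-n)} : 0 ≤ r < 1, θ ∈ ℝ}` is the closed disc
centered at the origin of radius `(2/(m+n+2)) ((m+n)/(m+n+2))^((m+n)/2)`;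
in particular it is convex. -/
theorem berezin_range_rank_one_zn_zm_hardy (m n : ℕ) (hn : 1 ≤ n) (hmn : n < m) :
    {z : ℂ | ∃ r θ : ℝ, 0 ≤ r ∧ r < 1 ∧
        z = ((r ^ (m + n) - r ^ (m + n + 2) : ℝ) : ℂ) *
          Complex.exp ((θ * ((m : ℝ) - n) : ℝ) * Complex.I)} =
      Metric.closedBall (0 : ℂ)
        ((2 / ((m : ℝ) + n + 2)) *
          (((m : ℝ) + n) / ((m : ℝ) + n + 2)) ^ (((m : ℝ) + n) / 2)) ∧
    Convex ℝ {z : ℂ | ∃ r θ : ℝ, 0 ≤ r ∧ r < 1 ∧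
        z = ((r ^ (m + n) - r ^ (m + n + 2) : ℝ) : ℂ) *
          Complex.exp ((θ * ((m : ℝ) - n) : ℝ) * Complex.I)} :=
  berezin_range_rank_one_zn_zm_hardy_general m n hmn
end

section
/- For n ≥ 1 and the rank one operator A(f) = ⟨f, zⁿ⟩zⁿ on the Bergman space A²(𝔻), the Berezin transform is Ã(λ) = (1-|λ|²)²|λ|^{2n}, and the Berezin range is [0, 4nⁿ/(n+2)^{n+2}]. Equivalently, the supremum of r^{2n}(1-r²)² over r ∈ [0,1) equals 4nⁿ/(n+2)^{n+2}, attained at r² = n/(n+2), and the range of this function is the full interval [0, 4nⁿ/(n+2)^{n+2}]. -/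
/-!
Writing `t = r²`, the profile is `t ^ n * (1 - t) ^ 2`. The points `t (n + 2) / n` and
`(1 - t) (n + 2) / 2` have weighted mean `1` for the weights `n / (n + 2)` and `2 / (n + 2)`,
so weighted AM-GM bounds the profile by `4 nⁿ / (n + 2) ^ (n + 2)`, with equality at
`t = n / (n + 2)`. The profile vanishes at `r = 0`, so by the intermediate value theorem on
`[0, √(n / (n + 2))]` every value in between is attained.
-/

open Set

theorem pow_mul_pow_le_one_of_weighted_mean_eq_one {a b : ℕ} {p q : ℝ} (hp : 0 ≤ p) (hq : 0 ≤ q)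
    (h : a * p + b * q = a + b) : p ^ a * q ^ b ≤ 1 := by
  rcases Nat.eq_zero_or_pos (a + b) with hab | hab
  · simp [Nat.add_eq_zero_iff.mp hab]
  have hs : (0 : ℝ) < a + b := by exact_mod_cast hab
  have hmean := Real.geom_mean_le_arith_mean2_weighted (w₁ := a / (a + b)) (w₂ := b / (a + b))
    (by positivity) (by positivity) hp hq (by field_simp)
  have hpow (x : ℝ) (hx : 0 ≤ x) (k : ℕ) : (x ^ ((k : ℝ) / (a + b))) ^ (a + b) = x ^ k := by
    rw [← Real.rpow_natCast _ (a + b), ← Real.rpow_mul hx, Nat.cast_add,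
      div_mul_cancel₀ _ hs.ne', Real.rpow_natCast]
  calc p ^ a * q ^ b
      = (p ^ ((a : ℝ) / (a + b)) * q ^ ((b : ℝ) / (a + b))) ^ (a + b) := by
        rw [mul_pow, hpow p hp, hpow q hq]
    _ ≤ 1 := by
        refine pow_le_one₀ (by positivity) (hmean.trans_eq ?_)
        field_simp
        linarith

theorem pow_mul_one_sub_pow_le {a b : ℕ} (ha : 0 < a) (hb : 0 < b) {t : ℝ} (ht₀ : 0 ≤ t)
    (ht₁ : t ≤ 1) : t ^ a * (1 - t) ^ b ≤ a ^ a * b ^ b / (a + b) ^ (a + b) := by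
  have ha' : (0 : ℝ) < a := by exact_mod_cast ha
  have hb' : (0 : ℝ) < b := by exact_mod_cast hb
  have hle := pow_mul_pow_le_one_of_weighted_mean_eq_one (a := a) (b := b)
    (p := t * (a + b) / a) (q := (1 - t) * (a + b) / b) (by positivity)
    (div_nonneg (mul_nonneg (sub_nonneg.2 ht₁) (by positivity)) hb'.le) (by field_simp; ring)
  rw [le_div_iff₀ (by positivity)]
  calc t ^ a * (1 - t) ^ b * (a + b) ^ (a + b)
      = (t * (a + b) / a) ^ a * ((1 - t) * (a + b) / b) ^ b * (a ^ a * b ^ b) := by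
        rw [div_pow, div_pow, mul_pow, mul_pow, pow_add]
        field_simp
    _ ≤ 1 * (a ^ a * b ^ b) := by gcongr
    _ = a ^ a * b ^ b := one_mul _

theorem div_add_pow_mul_one_sub_div_add_pow {a b : ℕ} (hab : 0 < a + b) :
    ((a : ℝ) / (a + b)) ^ a * (1 - a / (a + b)) ^ b = a ^ a * b ^ b / (a + b) ^ (a + b) := by
  have hs : (0 : ℝ) < a + b := by exact_mod_cast hab
  rw [one_sub_div hs.ne', add_sub_cancel_left, div_pow, div_pow, pow_add]
  field_simp

/-- `berezinProfile n ‖λ‖` is the Berezin transform of `f ↦ ⟨f, zⁿ⟩ zⁿ` on `A²(𝔻)` at `λ`. -/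
def berezinProfile (n : ℕ) (r : ℝ) : ℝ := r ^ (2 * n) * (1 - r ^ 2) ^ 2

namespace berezinProfile

theorem nonneg (n : ℕ) (r : ℝ) : 0 ≤ berezinProfile n r :=
  mul_nonneg ((even_two_mul n).pow_nonneg r) (sq_nonneg _)

theorem le {n : ℕ} (hn : 1 ≤ n) {r : ℝ} (hr : |r| ≤ 1) :
    berezinProfile n r ≤ 4 * (n : ℝ) ^ n / ((n : ℝ) + 2) ^ (n + 2) := by
  have h := pow_mul_one_sub_pow_le (a := n) (b := 2) hn two_pos (sq_nonneg r)
    (sq_le_one_iff_abs_le_one r |>.2 hr)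
  rw [berezinProfile, pow_mul]
  convert h using 2 <;> push_cast <;> ring

theorem sqrt_div_add_two (n : ℕ) :
    berezinProfile n (Real.sqrt ((n : ℝ) / (n + 2))) = 4 * (n : ℝ) ^ n / ((n : ℝ) + 2) ^ (n + 2) := by
  have h := div_add_pow_mul_one_sub_div_add_pow (a := n) (b := 2) (by omega)
  rw [berezinProfile, pow_mul, Real.sq_sqrt (by positivity)]
  convert h using 2 <;> push_cast <;> ring

theorem zero {n : ℕ} (hn : 1 ≤ n) : berezinProfile n 0 = 0 := by
  simp [berezinProfile, show 2 * n ≠ 0 by omega]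

theorem image_Ico {n : ℕ} (hn : 1 ≤ n) :
    berezinProfile n '' Ico 0 1 = Icc 0 (4 * (n : ℝ) ^ n / ((n : ℝ) + 2) ^ (n + 2)) := by
  refine (image_subset_iff.2 fun r hr => ?_).antisymm ?_
  · exact ⟨nonneg n r, le hn (abs_le.2 ⟨by linarith [hr.1], hr.2.le⟩)⟩
  have hsqrt : Real.sqrt ((n : ℝ) / (n + 2)) < 1 :=
    (Real.sqrt_lt' one_pos).2 (by rw [one_pow, div_lt_one (by positivity)]; linarith)
  calc Icc 0 (4 * (n : ℝ) ^ n / ((n : ℝ) + 2) ^ (n + 2))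
      = Icc (berezinProfile n 0) (berezinProfile n (Real.sqrt ((n : ℝ) / (n + 2)))) := by
        rw [zero hn, sqrt_div_add_two]
    _ ⊆ berezinProfile n '' Icc 0 (Real.sqrt ((n : ℝ) / (n + 2))) :=
        intermediate_value_Icc (Real.sqrt_nonneg _) (by unfold berezinProfile; fun_prop)
    _ ⊆ berezinProfile n '' Ico 0 1 := image_mono (Icc_subset_Ico_right hsqrt)

end berezinProfile

theorem setOf_exists_norm_lt_one_eq_image (g : ℝ → ℝ) :
    {z : ℂ | ∃ l : ℂ, ‖l‖ < 1 ∧ z = (g ‖l‖ : ℂ)} = (fun x : ℝ => (x : ℂ)) '' (g '' Ico 0 1) := by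
  ext z
  constructor
  · rintro ⟨l, hl, rfl⟩
    exact ⟨_, ⟨‖l‖, ⟨norm_nonneg l, hl⟩, rfl⟩, rfl⟩
  · rintro ⟨_, ⟨r, ⟨hr₀, hr₁⟩, rfl⟩, rfl⟩
    refine ⟨r, ?_, ?_⟩ <;> rw [Complex.norm_real, Real.norm_of_nonneg hr₀]
    exact hr₁

/-- For `n ≥ 1` and the rank one operator `A f = ⟨f, zⁿ⟩ zⁿ` on the Bergman space
`A²(𝔻)`, the Berezin transform is `(1-|λ|²)²|λ|^(2n)` and the Berezin range is
`[0, 4nⁿ/(n+2)^(n+2)]`: the supremum of `r^(2n)(1-r²)²` over `[0,1)` equals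
`4nⁿ/(n+2)^(n+2)`, attained at `r² = n/(n+2)`, and the range of this function
is the full interval. -/
theorem berezin_range_rank_one_zn_bergman (n : ℕ) (hn : 1 ≤ n) :
    (∀ r ∈ Set.Ico (0:ℝ) 1,
        r ^ (2*n) * (1 - r ^ 2) ^ 2 ≤ 4 * (n : ℝ) ^ n / ((n : ℝ) + 2) ^ (n + 2)) ∧
    (Real.sqrt ((n : ℝ) / (n + 2))) ^ (2*n) * (1 - (Real.sqrt ((n : ℝ) / (n + 2))) ^ 2) ^ 2
        = 4 * (n : ℝ) ^ n / ((n : ℝ) + 2) ^ (n + 2) ∧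
    (fun r : ℝ => r ^ (2*n) * (1 - r ^ 2) ^ 2) '' Set.Ico (0:ℝ) 1
        = Set.Icc 0 (4 * (n : ℝ) ^ n / ((n : ℝ) + 2) ^ (n + 2)) ∧
    {z : ℂ | ∃ l : ℂ, ‖l‖ < 1 ∧ z = (((1 - ‖l‖ ^ 2) ^ 2 * ‖l‖ ^ (2*n) : ℝ) : ℂ)}
        = (fun x : ℝ => (x : ℂ)) '' Set.Icc 0 (4 * (n : ℝ) ^ n / ((n : ℝ) + 2) ^ (n + 2)) := by
  have hcomm : (fun r : ℝ => (1 - r ^ 2) ^ 2 * r ^ (2 * n)) = berezinProfile n :=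
    funext fun r => mul_comm _ _
  refine ⟨fun r hr => (berezinProfile.image_Ico hn ▸ mem_image_of_mem _ hr).2,
    berezinProfile.sqrt_div_add_two n, berezinProfile.image_Ico hn, ?_⟩
  exact (setOf_exists_norm_lt_one_eq_image fun r => (1 - r ^ 2) ^ 2 * r ^ (2 * n)).trans
    (by rw [hcomm, berezinProfile.image_Ico hn])
end

section
/- Let m > n ≥ 1 and A(f) = ⟨f, zⁿ⟩z^m on the Bergman space A²(𝔻). Then Ber(A) = {(1-r²)² r^{m+n} e^{iθ(m-n)} : 0 ≤ r < 1, θ ∈ ℝ} is a closed disc centered at the origin of radius (4/(m+n+4))² · ((m+n)/(m+n+4))^{(m+n)/2}; in particular it is convex. The radius is sup_{0≤r<1} (1-r²)² r^{m+n}, attained at r = √((m+n)/(m+n+4)). -/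
/-!
Writing `λ = r e^{iθ}`, the Berezin transform has modulus `(1 - r²)² r^(m+n)` and argument
`θ(m - n)`; since `m ≠ n` every argument occurs, so the range is the set of `z` whose modulus is a
value of `r ↦ (1 - r²)² r^(m+n)` on `[0, 1)`. Weighted AM-GM applied to `1 - r²` and `r²` with
weights `4 : m + n` bounds this function by its value at `r² = (m+n)/(m+n+4)`, and the
intermediate value theorem on `[0, √((m+n)/(m+n+4))]` shows that every smaller nonnegative
value is attained.
-/

open Complex Set

theorem Real.one_sub_rpow_mul_rpow_le {a b t : ℝ} (ha : 0 < a) (hb : 0 < b) (ht₀ : 0 ≤ t)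
    (ht₁ : t ≤ 1) :
    (1 - t) ^ a * t ^ b ≤ (a / (a + b)) ^ a * (b / (a + b)) ^ b := by
  have hab : 0 < a + b := by positivity
  set w₁ := a / (a + b)
  set w₂ := b / (a + b)
  have hw₁ : 0 < w₁ := by positivity
  have hw₂ : 0 < w₂ := by positivity
  have hp₁ : 0 ≤ (1 - t) / w₁ := div_nonneg (by linarith) hw₁.le
  have hp₂ : 0 ≤ t / w₂ := div_nonneg ht₀ hw₂.le
  have hamgm : ((1 - t) / w₁) ^ w₁ * (t / w₂) ^ w₂ ≤ 1 := by
    calc ((1 - t) / w₁) ^ w₁ * (t / w₂) ^ w₂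
        ≤ w₁ * ((1 - t) / w₁) + w₂ * (t / w₂) :=
          Real.geom_mean_le_arith_mean2_weighted hw₁.le hw₂.le hp₁ hp₂
            (by rw [← add_div, div_self hab.ne'])
      _ = 1 := by field_simp; ring
  have hprod : ((1 - t) / w₁) ^ a * (t / w₂) ^ b ≤ 1 := by
    have h := Real.rpow_le_one (by positivity) hamgm hab.le
    rwa [Real.mul_rpow (by positivity) (by positivity), ← Real.rpow_mul hp₁, ← Real.rpow_mul hp₂,
      div_mul_cancel₀ _ hab.ne', div_mul_cancel₀ _ hab.ne'] at h
  calc (1 - t) ^ a * t ^ b = w₁ ^ a * w₂ ^ b * (((1 - t) / w₁) ^ a * (t / w₂) ^ b) := by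
        rw [Real.div_rpow (by linarith) hw₁.le, Real.div_rpow ht₀ hw₂.le]
        field_simp
    _ ≤ w₁ ^ a * w₂ ^ b := mul_le_of_le_one_right (by positivity) hprod

theorem Real.sq_rpow_div_two {r : ℝ} (hr : 0 ≤ r) (k : ℕ) : (r ^ 2) ^ ((k : ℝ) / 2) = r ^ k := by
  rw [Real.rpow_div_two_eq_sqrt _ (by positivity), Real.sqrt_sq hr, Real.rpow_natCast]

/-- The modulus `(1 - |λ|²)² |λ|^k` of the Berezin transform, as a function of `r = |λ|`. -/
def berezinModulus (k : ℕ) (r : ℝ) : ℝ := (1 - r ^ 2) ^ 2 * r ^ k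

noncomputable def berezinModulusMax (k : ℕ) : ℝ :=
  (4 / ((k : ℝ) + 4)) ^ 2 * ((k : ℝ) / ((k : ℝ) + 4)) ^ ((k : ℝ) / 2)

theorem berezinModulus_nonneg (k : ℕ) {r : ℝ} (hr : 0 ≤ r) : 0 ≤ berezinModulus k r := by
  unfold berezinModulus; positivity

theorem continuous_berezinModulus (k : ℕ) : Continuous (berezinModulus k) := by
  unfold berezinModulus; fun_prop

theorem berezinModulus_zero {k : ℕ} (hk : k ≠ 0) : berezinModulus k 0 = 0 := by
  simp [berezinModulus, hk]

theorem berezinModulus_le_max {k : ℕ} (hk : 0 < k) {r : ℝ} (hr₀ : 0 ≤ r) (hr₁ : r ≤ 1) :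
    berezinModulus k r ≤ berezinModulusMax k := by
  have h := Real.one_sub_rpow_mul_rpow_le two_pos (half_pos (Nat.cast_pos.mpr hk))
    (sq_nonneg r) (pow_le_one₀ hr₀ hr₁)
  have hw₁ : (2 : ℝ) / (2 + k / 2) = 4 / (k + 4) := by field_simp; ring
  have hw₂ : (k / 2 : ℝ) / (2 + k / 2) = k / (k + 4) := by field_simp; ring
  rwa [Real.rpow_two, Real.sq_rpow_div_two hr₀, hw₁, hw₂, Real.rpow_two] at h

theorem berezinModulus_sqrt (k : ℕ) :
    berezinModulus k √((k : ℝ) / (k + 4)) = berezinModulusMax k := by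
  have hx : (0 : ℝ) ≤ k / (k + 4) := by positivity
  rw [berezinModulus, berezinModulusMax, Real.sq_sqrt hx, ← Real.rpow_natCast √_ k,
    ← Real.rpow_div_two_eq_sqrt _ hx]
  congr 2
  field_simp
  ring

theorem berezinModulus_image_Ico {k : ℕ} (hk : 0 < k) :
    berezinModulus k '' Ico 0 1 = Icc 0 (berezinModulusMax k) := by
  refine Subset.antisymm ?_ ?_
  · rintro _ ⟨r, ⟨hr₀, hr₁⟩, rfl⟩
    exact ⟨berezinModulus_nonneg k hr₀, berezinModulus_le_max hk hr₀ hr₁.le⟩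
  · have hs₁ : √((k : ℝ) / (k + 4)) < 1 := by
      rw [Real.sqrt_lt' one_pos, one_pow, div_lt_one (by positivity)]
      linarith
    calc Icc 0 (berezinModulusMax k)
        = Icc (berezinModulus k 0) (berezinModulus k √((k : ℝ) / (k + 4))) := by
          rw [berezinModulus_zero hk.ne', berezinModulus_sqrt]
      _ ⊆ berezinModulus k '' Icc 0 √((k : ℝ) / (k + 4)) :=
          intermediate_value_Icc (Real.sqrt_nonneg _) (continuous_berezinModulus k).continuousOn
      _ ⊆ berezinModulus k '' Ico 0 1 := image_mono (Icc_subset_Ico_right hs₁)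

theorem Complex.exists_eq_ofReal_mul_exp_iff {x c : ℝ} (hx : 0 ≤ x) (hc : c ≠ 0) (z : ℂ) :
    (∃ θ : ℝ, z = x * exp (↑(θ * c) * I)) ↔ ‖z‖ = x := by
  constructor
  · rintro ⟨θ, rfl⟩
    rw [norm_mul, norm_exp_ofReal_mul_I, norm_real, Real.norm_of_nonneg hx, mul_one]
  · rintro rfl
    exact ⟨arg z / c, by rw [div_mul_cancel₀ _ hc, norm_mul_exp_arg_mul_I]⟩

theorem berezin_range_eq_closedBall {k : ℕ} (hk : 0 < k) {c : ℝ} (hc : c ≠ 0) :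
    {z : ℂ | ∃ r θ : ℝ, 0 ≤ r ∧ r < 1 ∧ z = berezinModulus k r * exp (↑(θ * c) * I)} =
      Metric.closedBall 0 (berezinModulusMax k) := by
  ext z
  have hpolar : z ∈ {z : ℂ | ∃ r θ : ℝ, 0 ≤ r ∧ r < 1 ∧
      z = berezinModulus k r * exp (↑(θ * c) * I)} ↔ ‖z‖ ∈ berezinModulus k '' Ico 0 1 := by
    simp only [mem_image, mem_Ico, and_assoc, exists_and_left]
    refine exists_congr fun r ↦ and_congr_right fun hr₀ ↦ and_congr_right fun _ ↦ ?_
    rw [exists_eq_ofReal_mul_exp_iff (berezinModulus_nonneg k hr₀) hc, eq_comm]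
  rw [hpolar, berezinModulus_image_Ico hk, mem_closedBall_zero_iff, mem_Icc,
    and_iff_right (norm_nonneg z)]

theorem berezin_range_rank_one_zn_zm_bergman_general (m n : ℕ) (hmn : n < m) :
    ({z : ℂ | ∃ r θ : ℝ, 0 ≤ r ∧ r < 1 ∧
        z = (((1 - r ^ 2) ^ 2 * r ^ (m + n) : ℝ) : ℂ) *
          Complex.exp ((θ * ((m : ℝ) - n) : ℝ) * Complex.I)} =
      Metric.closedBall (0 : ℂ)
        ((4 / ((m : ℝ) + n + 4)) ^ 2 *
          (((m : ℝ) + n) / ((m : ℝ) + n + 4)) ^ (((m : ℝ) + n) / 2))) ∧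
    ((1 - (Real.sqrt (((m : ℝ) + n) / ((m : ℝ) + n + 4))) ^ 2) ^ 2 *
        (Real.sqrt (((m : ℝ) + n) / ((m : ℝ) + n + 4))) ^ (m + n)
      = (4 / ((m : ℝ) + n + 4)) ^ 2 *
          (((m : ℝ) + n) / ((m : ℝ) + n + 4)) ^ (((m : ℝ) + n) / 2)) ∧
    Convex ℝ {z : ℂ | ∃ r θ : ℝ, 0 ≤ r ∧ r < 1 ∧
        z = (((1 - r ^ 2) ^ 2 * r ^ (m + n) : ℝ) : ℂ) *
          Complex.exp ((θ * ((m : ℝ) - n) : ℝ) * Complex.I)} := by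
  have hk : 0 < m + n := by omega
  have hc : (m : ℝ) - n ≠ 0 := sub_ne_zero.mpr (by exact_mod_cast hmn.ne')
  have hcast : (m : ℝ) + n = ((m + n : ℕ) : ℝ) := by push_cast; rfl
  rw [hcast]
  have hrange := berezin_range_eq_closedBall hk hc
  exact ⟨hrange, berezinModulus_sqrt (m + n), hrange ▸ convex_closedBall _ _⟩

/-- For `m > n ≥ 1` and `A f = ⟨f, zⁿ⟩ z^m` on the Bergman space `A²(𝔻)`,
`Ber(A) = {(1-r²)² r^(m+n) e^{iθ(m-n)} : 0 ≤ r < 1, θ ∈ ℝ}` is the closed disc centered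
at the origin of radius `(4/(m+n+4))² ((m+n)/(m+n+4))^((m+n)/2)`, attained at
`r = √((m+n)/(m+n+4))`; in particular it is convex. -/
theorem berezin_range_rank_one_zn_zm_bergman (m n : ℕ) (hn : 1 ≤ n) (hmn : n < m) :
    ({z : ℂ | ∃ r θ : ℝ, 0 ≤ r ∧ r < 1 ∧
        z = (((1 - r ^ 2) ^ 2 * r ^ (m + n) : ℝ) : ℂ) *
          Complex.exp ((θ * ((m : ℝ) - n) : ℝ) * Complex.I)} =
      Metric.closedBall (0 : ℂ)
        ((4 / ((m : ℝ) + n + 4)) ^ 2 *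
          (((m : ℝ) + n) / ((m : ℝ) + n + 4)) ^ (((m : ℝ) + n) / 2))) ∧
    ((1 - (Real.sqrt (((m : ℝ) + n) / ((m : ℝ) + n + 4))) ^ 2) ^ 2 *
        (Real.sqrt (((m : ℝ) + n) / ((m : ℝ) + n + 4))) ^ (m + n)
      = (4 / ((m : ℝ) + n + 4)) ^ 2 *
          (((m : ℝ) + n) / ((m : ℝ) + n + 4)) ^ (((m : ℝ) + n) / 2)) ∧
    Convex ℝ {z : ℂ | ∃ r θ : ℝ, 0 ≤ r ∧ r < 1 ∧
        z = (((1 - r ^ 2) ^ 2 * r ^ (m + n) : ℝ) : ℂ) *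
          Complex.exp ((θ * ((m : ℝ) - n) : ℝ) * Complex.I)} :=
  berezin_range_rank_one_zn_zm_bergman_general m n hmn
end

section
/- For every θ ∈ ℝ and t ∈ [0,1], |t e^{iθ} + (1-t) e^{-iθ}| = √(cos²θ + (2t-1)² sin²θ), and if sin θ ≠ 0 then ∫₀¹ √(cos²θ + (2t-1)² sin²θ) dt = 1/2 + (1/4)|sin θ| cot²θ · log((1 + |sin θ|)/(1 - |sin θ|)). -/
open Real

/-! The two exponentials combine to `cos θ + i (2t - 1) sin θ`, which gives the modulus. For the
integral, the substitution `x = (2t - 1) b` with `b = |sin θ|` reduces it to the classical primitive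
`(x √(a² + x²) + a² arsinh (x / a)) / 2` of `√(a² + x²)`, with `a = |cos θ| = √(1 - b²)`; since
`sinh (artanh b) = b / √(1 - b²)`, the arsinh term is `artanh b = ½ log ((1 + b) / (1 - b))`. -/

theorem mul_exp_mul_I_add_mul_exp_neg_mul_I (t s θ : ℝ) :
    (t : ℂ) * Complex.exp (θ * Complex.I) + (s : ℂ) * Complex.exp (-θ * Complex.I)
      = ((t + s) * cos θ : ℝ) + ((t - s) * sin θ : ℝ) * Complex.I := by
  rw [← Complex.ofReal_neg, Complex.exp_mul_I, Complex.exp_mul_I]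
  push_cast
  rw [Complex.cos_neg, Complex.sin_neg]
  ring

theorem hasDerivAt_primitive_sqrt_sq_add_sq {a : ℝ} (ha : 0 < a) (x : ℝ) :
    HasDerivAt (fun x ↦ (x * √(a ^ 2 + x ^ 2) + a ^ 2 * arsinh (x / a)) / 2)
      √(a ^ 2 + x ^ 2) x := by
  have hpos : 0 < a ^ 2 + x ^ 2 := by positivity
  have hsqrt := ((hasDerivAt_pow 2 x).const_add (a ^ 2)).sqrt hpos.ne'
  have harsinh := ((hasDerivAt_id' x).div_const a).arsinh
  refine ((((hasDerivAt_id' x).mul hsqrt).add (harsinh.const_mul (a ^ 2))).div_const 2).congr_deriv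
    ?_
  have hS : √(1 + (x / a) ^ 2) = √(a ^ 2 + x ^ 2) / a := by
    rw [show 1 + (x / a) ^ 2 = (a ^ 2 + x ^ 2) / a ^ 2 by field_simp,
      sqrt_div hpos.le, sqrt_sq ha.le]
  have hS2 := sq_sqrt hpos.le
  rw [hS, smul_eq_mul]
  field_simp
  linear_combination (-2) * hS2

theorem integral_sqrt_sq_add_sq_neg_self {a : ℝ} (ha : 0 < a) (c : ℝ) :
    ∫ x in -c..c, √(a ^ 2 + x ^ 2) = c * √(a ^ 2 + c ^ 2) + a ^ 2 * arsinh (c / a) := by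
  rw [intervalIntegral.integral_eq_sub_of_hasDerivAt
    (fun x _ ↦ hasDerivAt_primitive_sqrt_sq_add_sq ha x)
    (Continuous.intervalIntegrable (by fun_prop) _ _)]
  simp only [neg_sq, neg_div, arsinh_neg]
  ring

theorem arsinh_div_sqrt_one_sub_sq {x : ℝ} (hx : x ∈ Set.Ioo (-1) 1) :
    arsinh (x / √(1 - x ^ 2)) = artanh x := by
  rw [← sinh_artanh hx, arsinh_sinh]

theorem integral_sqrt_one_sub_sq_add_two_mul_sub_one_sq_mul_sq {b : ℝ} (hb : b ∈ Set.Ioo (-1) 1)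
    (hb0 : b ≠ 0) :
    ∫ t in (0 : ℝ)..1, √(1 - b ^ 2 + (2 * t - 1) ^ 2 * b ^ 2)
      = 1 / 2 + (1 - b ^ 2) / (2 * b) * artanh b := by
  have ha : 0 < 1 - b ^ 2 := by nlinarith [hb.1, hb.2]
  set a := √(1 - b ^ 2)
  have ha2 : a ^ 2 = 1 - b ^ 2 := sq_sqrt ha.le
  have hsub : ∀ t : ℝ, 1 - b ^ 2 + (2 * t - 1) ^ 2 * b ^ 2 = a ^ 2 + ((2 * b) * t - b) ^ 2 := by
    intro t; rw [ha2]; ring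
  simp only [hsub]
  rw [intervalIntegral.integral_comp_mul_sub (fun x ↦ √(a ^ 2 + x ^ 2))
      (mul_ne_zero two_ne_zero hb0),
    show 2 * b * 0 - b = -b by ring, show 2 * b * 1 - b = b by ring,
    integral_sqrt_sq_add_sq_neg_self (sqrt_pos.2 ha), arsinh_div_sqrt_one_sub_sq hb, ha2,
    show 1 - b ^ 2 + b ^ 2 = 1 by ring, sqrt_one, smul_eq_mul]
  field_simp

/-- For every `θ ∈ ℝ` and `t ∈ [0,1]`,
`|t e^{iθ} + (1-t) e^{-iθ}| = √(cos²θ + (2t-1)² sin²θ)`, and if `0 < |sin θ| < 1` then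
`∫₀¹ √(cos²θ + (2t-1)² sin²θ) dt
  = 1/2 + (1/4)|sin θ| cot²θ log((1+|sin θ|)/(1-|sin θ|))`. -/
theorem abs_convex_combination_exp (θ : ℝ) :
    (∀ t ∈ Set.Icc (0:ℝ) 1,
      ‖((t : ℂ) * Complex.exp ((θ : ℂ) * Complex.I) +
          ((1 - t : ℝ) : ℂ) * Complex.exp (-(θ : ℂ) * Complex.I))‖
        = Real.sqrt (Real.cos θ ^ 2 + (2*t - 1) ^ 2 * Real.sin θ ^ 2)) ∧
    (Real.sin θ ≠ 0 → |Real.sin θ| < 1 →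
      (∫ t in (0:ℝ)..1, Real.sqrt (Real.cos θ ^ 2 + (2*t - 1) ^ 2 * Real.sin θ ^ 2))
        = 1/2 + (1/4) * |Real.sin θ| * (Real.cos θ / Real.sin θ) ^ 2 *
            Real.log ((1 + |Real.sin θ|) / (1 - |Real.sin θ|))) := by
  refine ⟨fun t _ ↦ ?_, fun hs hs1 ↦ ?_⟩
  · rw [mul_exp_mul_I_add_mul_exp_neg_mul_I, Complex.norm_add_mul_I]
    ring_nf
  · have hb : |sin θ| ∈ Set.Ioo (-1) 1 := ⟨by linarith [abs_nonneg (sin θ)], hs1⟩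
    have hcos : ∀ t : ℝ, cos θ ^ 2 + (2 * t - 1) ^ 2 * sin θ ^ 2
        = 1 - |sin θ| ^ 2 + (2 * t - 1) ^ 2 * |sin θ| ^ 2 := by
      intro t; rw [sq_abs, cos_sq']
    simp only [hcos]
    rw [integral_sqrt_one_sub_sq_add_two_mul_sub_one_sq_mul_sq hb (abs_ne_zero.2 hs),
      artanh_eq_half_log (Set.Ioo_subset_Icc_self hb), div_pow, cos_sq', ← sq_abs (sin θ)]
    field_simp
    ring
end

section
/- For complex numbers c, d and t ∈ (0,1), setting τ_t = min{t, 1-t}: (|c|+|d|)/2 - (1/(2τ_t))·((1-t)|c| + t|d| - |(1-t)c + td|) ≤ |(c+d)/2|. -/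
section TriangleDefect

variable {E : Type*} [SeminormedAddCommGroup E] [NormedSpace ℝ E]

/-- For `t ≤ 1/2`, write `(1 - t) • x + t • y = (1 - 2t) • x + t • (x + y)` and apply the
triangle inequality. -/
theorem mul_triangle_defect_le_of_le_one_sub (x y : E) {t : ℝ} (ht0 : 0 ≤ t) (ht : t ≤ 1 - t) :
    t * (‖x‖ + ‖y‖ - ‖x + y‖) ≤ (1 - t) * ‖x‖ + t * ‖y‖ - ‖(1 - t) • x + t • y‖ := by
  have hsplit : (1 - t) • x + t • y = (1 - 2 * t) • x + t • (x + y) := by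
    rw [smul_add, ← add_assoc, ← add_smul]
    ring_nf
  have htri : ‖(1 - t) • x + t • y‖ ≤ (1 - 2 * t) * ‖x‖ + t * ‖x + y‖ := by
    calc ‖(1 - t) • x + t • y‖ ≤ ‖(1 - 2 * t) • x‖ + ‖t • (x + y)‖ := hsplit ▸ norm_add_le _ _
      _ = (1 - 2 * t) * ‖x‖ + t * ‖x + y‖ := by
        rw [norm_smul_of_nonneg (by linarith), norm_smul_of_nonneg ht0]
  linarith

theorem min_mul_triangle_defect_le (x y : E) {t : ℝ} (ht0 : 0 ≤ t) (ht1 : t ≤ 1) :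
    min t (1 - t) * (‖x‖ + ‖y‖ - ‖x + y‖) ≤
      (1 - t) * ‖x‖ + t * ‖y‖ - ‖(1 - t) • x + t • y‖ := by
  rcases le_total t (1 - t) with h | h
  · rw [min_eq_left h]
    exact mul_triangle_defect_le_of_le_one_sub x y ht0 h
  · rw [min_eq_right h]
    have hswap := mul_triangle_defect_le_of_le_one_sub y x (sub_nonneg.2 ht1) (by linarith)
    rw [sub_sub_cancel, add_comm y, add_comm (t • y)] at hswap
    linarith

end TriangleDefect

/-- For complex numbers `c, d` and `t ∈ (0,1)`, with `τ_t = min{t, 1-t}`: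
`(|c|+|d|)/2 - (1/(2τ_t))((1-t)|c| + t|d| - |(1-t)c + t d|) ≤ |(c+d)/2|`. -/
theorem reverse_triangle_inequality (c d : ℂ) (t : ℝ) (ht : t ∈ Set.Ioo (0:ℝ) 1) :
    (‖c‖ + ‖d‖) / 2 -
        (1 / (2 * min t (1 - t))) *
          ((1 - t) * ‖c‖ + t * ‖d‖ -
            ‖((1 - t : ℝ) : ℂ) * c + (t : ℂ) * d‖) ≤
      ‖(c + d) / 2‖ := by
  obtain ⟨ht0, ht1⟩ := ht
  have hτ : 0 < min t (1 - t) := lt_min ht0 (by linarith)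
  have hdefect := min_mul_triangle_defect_le c d ht0.le ht1.le
  simp only [Complex.real_smul] at hdefect
  have hscaled := mul_le_mul_of_nonneg_left hdefect (by positivity : 0 ≤ 1 / (2 * min t (1 - t)))
  rw [← mul_assoc, one_div_mul_eq_div, div_mul_cancel_right₀ hτ.ne'] at hscaled
  rw [norm_div, Complex.norm_ofNat]
  linarith
end
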